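/- Let T be a Lie-Yamaguti algebra over a field k of characteristic zero and let (F_n, G_n)_{n≥0} and (F'_n, G'_n)_{n≥0} be formal one-parameter deformations of T that are equivalent via a sequence (φ_n)_{n≥0} of linear maps with φ₀ = id_T. Then the first-order terms differ by the coboundary of φ₁ with respect to the regular representation: F'₁(a,b) - F₁(a,b) = a*φ₁(b) - b*φ₁(a) - φ₁(a*b) and G'₁(a,b,c) - G₁(a,b,c) = [φ₁(a),b,c] - [φ₁(b),a,c] + [a,b,φ₁(c)] - φ₁([a,b,c]) for all a,b,c ∈ T. In particular (F₁,G₁) and (F'₁,G'₁) belong to the same cohomology class in H²(T,T)×H³(T,T). -/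

import Mathlib

/-!
At order one the equivalence equations, with `φ₀ = id`, read
`φ₁(a * b) + F'₁(a,b) = a * φ₁(b) + φ₁(a) * b + F₁(a,b)` and
`φ₁[a,b,c] + G'₁(a,b,c) = [a,b,φ₁(c)] + [a,φ₁(b),c] + [φ₁(a),b,c] + G₁(a,b,c)`.
Both products are alternating in their first two arguments (LY1, LY2), so `φ₁(a) * b = -b * φ₁(a)`
and `[a,φ₁(b),c] = -[φ₁(b),a,c]`, which turns these into the coboundary formulas.
-/

structure LieYamaguti (k T : Type*) [Field k] [CharZero k] [AddCommGroup T] [Module k T] where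
  mul : T →ₗ[k] T →ₗ[k] T
  tri : T →ₗ[k] T →ₗ[k] T →ₗ[k] T
  ly1 : ∀ a : T, mul a a = 0
  ly2 : ∀ a b : T, tri a a b = 0
  ly3 : ∀ a b c : T, tri a b c + tri b c a + tri c a b
      + mul (mul a b) c + mul (mul b c) a + mul (mul c a) b = 0
  ly4 : ∀ a b c d : T, tri (mul a b) c d + tri (mul b c) a d + tri (mul c a) b d = 0
  ly5 : ∀ a b c d : T, tri a b (mul c d) = mul (tri a b c) d + mul c (tri a b d)
  ly6 : ∀ a b c d e : T, tri a b (tri c d e)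
      = tri (tri a b c) d e + tri c (tri a b d) e + tri c d (tri a b e)

/-- `f : T × T → V` is bilinear. -/
def IsBilin (k : Type*) {T V : Type*} [Field k] [AddCommGroup T] [Module k T]
    [AddCommGroup V] [Module k V] (f : T → T → V) : Prop :=
  (∀ b, IsLinearMap k (fun a => f a b)) ∧ (∀ a, IsLinearMap k (fun b => f a b))

/-- `g : T × T × T → V` is trilinear. -/
def IsTrilin (k : Type*) {T V : Type*} [Field k] [AddCommGroup T] [Module k T]
    [AddCommGroup V] [Module k V] (g : T → T → T → V) : Prop :=
  (∀ b c, IsLinearMap k (fun a => g a b c)) ∧ (∀ a c, IsLinearMap k (fun b => g a b c)) ∧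
  (∀ a b, IsLinearMap k (fun c => g a b c))

/-- A formal one-parameter deformation of the Lie-Yamaguti algebra `L`. -/
structure LYDeform (k T : Type*) [Field k] [CharZero k] [AddCommGroup T] [Module k T]
    (L : LieYamaguti k T) where
  F : ℕ → T → T → T
  G : ℕ → T → T → T → T
  Fbil : ∀ n, IsBilin k (F n)
  Gtril : ∀ n, IsTrilin k (G n)
  F0 : ∀ a b : T, F 0 a b = L.mul a b
  G0 : ∀ a b c : T, G 0 a b c = L.tri a b c
  Falt : ∀ n, ∀ a : T, F n a a = 0
  Galt : ∀ n, ∀ a b : T, G n a a b = 0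
  d1 : ∀ n, ∀ a b c : T,
    (∑ p ∈ Finset.HasAntidiagonal.antidiagonal n,
      (F p.1 (F p.2 a b) c + F p.1 (F p.2 b c) a + F p.1 (F p.2 c a) b))
      + G n a b c + G n b c a + G n c a b = 0
  d2 : ∀ n, ∀ a b c d : T,
    ∑ p ∈ Finset.HasAntidiagonal.antidiagonal n,
      (G p.1 (F p.2 a b) c d + G p.1 (F p.2 b c) a d + G p.1 (F p.2 c a) b d) = 0
  d3 : ∀ n, ∀ a b c d : T,
    ∑ p ∈ Finset.HasAntidiagonal.antidiagonal n,
      (G p.1 a b (F p.2 c d) - F p.1 (G p.2 a b c) d - F p.1 c (G p.2 a b d)) = 0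
  d4 : ∀ n, ∀ a b c d e : T,
    ∑ p ∈ Finset.HasAntidiagonal.antidiagonal n,
      (G p.1 a b (G p.2 c d e) - G p.1 (G p.2 a b c) d e
        - G p.1 c (G p.2 a b d) e - G p.1 c d (G p.2 a b e)) = 0

variable {k T : Type*} [Field k] [CharZero k] [AddCommGroup T] [Module k T]

namespace LieYamaguti

variable (L : LieYamaguti k T)

theorem mul_isAlt : L.mul.IsAlt := L.ly1

theorem tri_isAlt : L.tri.IsAlt := fun a => LinearMap.ext (L.ly2 a)

end LieYamaguti

open Finset

theorem Finset.Nat.sum_antidiagonal_one {M : Type*} [AddCommMonoid M] (f : ℕ × ℕ → M) :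
    ∑ p ∈ antidiagonal 1, f p = f (0, 1) + f (1, 0) := by
  simp [Nat.sum_antidiagonal_succ]

section FirstOrder

variable {M : Type*} [AddCommMonoid M] {φ : ℕ → M → M}

theorem equiv_order_one_bilin (hφ0 : ∀ x, φ 0 x = x) {F F' : ℕ → M → M → M} {a b : M}
    (h : ∑ p ∈ antidiagonal 1, φ p.2 (F' p.1 a b)
      = ∑ p ∈ antidiagonal 1, ∑ q ∈ antidiagonal p.2, F p.1 (φ q.1 a) (φ q.2 b)) :
    φ 1 (F' 0 a b) + F' 1 a b = F 0 a (φ 1 b) + F 0 (φ 1 a) b + F 1 a b := by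
  simpa [Nat.sum_antidiagonal_one, hφ0] using h

theorem equiv_order_one_trilin (hφ0 : ∀ x, φ 0 x = x) {G G' : ℕ → M → M → M → M} {a b c : M}
    (h : ∑ p ∈ antidiagonal 1, φ p.2 (G' p.1 a b c)
      = ∑ p ∈ antidiagonal 1, ∑ q ∈ antidiagonal p.2, ∑ r ∈ antidiagonal q.2,
          G p.1 (φ q.1 a) (φ r.1 b) (φ r.2 c)) :
    φ 1 (G' 0 a b c) + G' 1 a b c
      = G 0 a b (φ 1 c) + G 0 a (φ 1 b) c + G 0 (φ 1 a) b c + G 1 a b c := by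
  simpa [Nat.sum_antidiagonal_one, hφ0, add_assoc] using h

end FirstOrder

/-- If two formal deformations are equivalent via `(φ_n)` with `φ₀ = id`, then their
first-order terms differ by the coboundary of `φ₁` (with respect to the regular
representation); in particular they belong to the same cohomology class in
`H²(T,T) × H³(T,T)`. -/
theorem equivalent_deformations_first_order (L : LieYamaguti k T)
    (Df Df' : LYDeform k T L) (φ : ℕ → T →ₗ[k] T) (hφ0 : φ 0 = LinearMap.id)
    (hF : ∀ n, ∀ a b : T,
      ∑ p ∈ Finset.HasAntidiagonal.antidiagonal n, φ p.2 (Df'.F p.1 a b)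
        = ∑ p ∈ Finset.HasAntidiagonal.antidiagonal n, ∑ q ∈ Finset.HasAntidiagonal.antidiagonal p.2,
            Df.F p.1 (φ q.1 a) (φ q.2 b))
    (hG : ∀ n, ∀ a b c : T,
      ∑ p ∈ Finset.HasAntidiagonal.antidiagonal n, φ p.2 (Df'.G p.1 a b c)
        = ∑ p ∈ Finset.HasAntidiagonal.antidiagonal n, ∑ q ∈ Finset.HasAntidiagonal.antidiagonal p.2,
            ∑ r ∈ Finset.HasAntidiagonal.antidiagonal q.2,
              Df.G p.1 (φ q.1 a) (φ r.1 b) (φ r.2 c)) :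
    (∀ a b : T, Df'.F 1 a b - Df.F 1 a b
        = L.mul a (φ 1 b) - L.mul b (φ 1 a) - φ 1 (L.mul a b)) ∧
    (∀ a b c : T, Df'.G 1 a b c - Df.G 1 a b c
        = L.tri (φ 1 a) b c - L.tri (φ 1 b) a c + L.tri a b (φ 1 c) - φ 1 (L.tri a b c)) := by
  refine ⟨fun a b => ?_, fun a b c => ?_⟩
  · have h := equiv_order_one_bilin (φ := (φ ·)) (LinearMap.congr_fun hφ0) (hF 1 a b)
    simp only [Df.F0, Df'.F0] at h
    have hskew := L.mul_isAlt.neg b (φ 1 a)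
    linear_combination (norm := abel) h - hskew
  · have h := equiv_order_one_trilin (φ := (φ ·)) (LinearMap.congr_fun hφ0) (hG 1 a b c)
    simp only [Df.G0, Df'.G0] at h
    have hskew := LinearMap.congr_fun (L.tri_isAlt.neg a (φ 1 b)) c
    rw [LinearMap.neg_apply] at hskew
    linear_combination (norm := abel) h - hskew
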